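/- Fix real numbers a < 0 < b, let L : ℝ → ℝ be convex and continuous on the closed interval [a,b], and let g : ℝ → ℝ be Lipschitz. For x ∈ ℝ and t > 0 define u(x,t) := min_{y ∈ [x − b·t, x − a·t]} ( t·L((x−y)/t) + g(y) ), and define H : ℝ → ℝ by H(v) := max_{p ∈ [a,b]} ( v·p − L(p) ). Then: (i) for Lebesgue-almost every (x,t) ∈ ℝ × (0,∞), u is differentiable at (x,t) and ∂_t u(x,t) + H( ∂_x u(x,t) ) = 0; and (ii) for every x ∈ ℝ, u(x,t) → g(x) as t → 0⁺. -/

import Mathlib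

/-!
Substituting `y = x - t q`, the Hopf–Lax value becomes a minimum over velocities,
`u(x,t) = min_{q ∈ [a,b]} (t L q + g (x - t q))`. In this form it is `K`-Lipschitz in `x` (every
competitor is), Lipschitz in `t ≥ 0` and equal to `g` at `t = 0`; so it is Lipschitz on the closed
half plane and, by Rademacher's theorem, differentiable almost everywhere.

At a point of differentiability the equation comes from two inequalities along the lines
`h ↦ (x + h p, t + h)`. Convexity of `L` gives `u(x + h p, t + h) ≤ u(x,t) + h L p` for `h > 0`,
hence `u_t + p u_x ≤ L p` for every `p ∈ [a,b]`. For an optimal velocity `q` at `(x,t)` the same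
competitor gives `u(x + h q, t + h) ≤ u(x,t) + h L q` for all real `h`, a two-sided maximum, hence
equality at `q`. Thus `-u_t = max_p (p u_x - L p) = H(u_x)`.
-/

open Set Filter Topology MeasureTheory Function
open scoped NNReal

theorem LipschitzOnWith.uncurry_univ_prod {α β γ : Type*} [PseudoEMetricSpace α]
    [PseudoEMetricSpace β] [PseudoEMetricSpace γ] {f : α → β → γ} {s : Set β}
    {Kα Kβ : ℝ≥0} (hα : ∀ y ∈ s, LipschitzWith Kα fun x => f x y)
    (hβ : ∀ x, LipschitzOnWith Kβ (f x) s) :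
    LipschitzOnWith (Kα + Kβ) (uncurry f) (univ ×ˢ s) := by
  rintro ⟨x₁, y₁⟩ ⟨-, hy₁⟩ ⟨x₂, y₂⟩ ⟨-, hy₂⟩
  simp only [uncurry, ENNReal.coe_add, add_mul]
  apply le_trans (edist_triangle _ (f x₂ y₁) _)
  exact add_le_add (le_trans (hα _ hy₁ _ _) <| mul_right_mono <| le_max_left _ _)
    (le_trans (hβ _ hy₁ hy₂) <| mul_right_mono <| le_max_right _ _)

theorem IsLocalMaxOn.hasDerivAt_nonpos_of_Ici {φ : ℝ → ℝ} {φ' a : ℝ}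
    (hmax : IsLocalMaxOn φ (Ici a) a) (hφ : HasDerivAt φ φ' a) : φ' ≤ 0 := by
  have h1 : (1 : ℝ) ∈ posTangentConeAt (Ici a) a :=
    mem_posTangentConeAt_of_segment_subset
      ((segment_subset_Icc (by simp)).trans Icc_subset_Ici_self)
  simpa using hmax.hasFDerivWithinAt_nonpos hφ.hasDerivWithinAt.hasFDerivWithinAt h1

theorem HasFDerivAt.hasDerivAt_uncurry_line {V : ℝ → ℝ → ℝ} {D : ℝ × ℝ →L[ℝ] ℝ} {x t : ℝ}
    (hD : HasFDerivAt (uncurry V) D (x, t)) (p : ℝ) :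
    HasDerivAt (fun h => V (x + h * p) (t + h)) (D (p, 1)) 0 := by
  have hline : HasDerivAt (fun h : ℝ => (x + h * p, t + h)) (p, 1) 0 :=
    HasDerivAt.prodMk (by simpa using ((hasDerivAt_id (0 : ℝ)).mul_const p).const_add x)
      ((hasDerivAt_id (0 : ℝ)).const_add t)
  exact hD.comp_hasDerivAt_of_eq 0 hline (by simp)

theorem hamiltonian_eq_of_hasFDerivAt {a b : ℝ} {L : ℝ → ℝ} {V : ℝ → ℝ → ℝ}
    {D : ℝ × ℝ →L[ℝ] ℝ} {x t : ℝ} (hD : HasFDerivAt (uncurry V) D (x, t))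
    (hsub : ∀ p ∈ Icc a b, ∀ h > 0, V (x + h * p) (t + h) ≤ V x t + h * L p)
    (hopt : ∃ q ∈ Icc a b, ∀ h, V (x + h * q) (t + h) ≤ V x t + h * L q) :
    D (0, 1) + sSup ((fun p => D (1, 0) * p - L p) '' Icc a b) = 0 := by
  have hDp (p : ℝ) : D (p, 1) = D (1, 0) * p + D (0, 1) := by
    rw [show ((p, 1) : ℝ × ℝ) = p • ((1, 0) : ℝ × ℝ) + (0, 1) by simp, map_add, map_smul,
      smul_eq_mul, mul_comm]
  have hline (p : ℝ) :
      HasDerivAt (fun h => V (x + h * p) (t + h) - h * L p) (D (p, 1) - L p) 0 :=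
    (hD.hasDerivAt_uncurry_line p).sub (hasDerivAt_mul_const (L p))
  have hle : ∀ p ∈ Icc a b, D (p, 1) ≤ L p := by
    intro p hp
    have hmax : IsLocalMaxOn (fun h => V (x + h * p) (t + h) - h * L p) (Ici 0) 0 := by
      refine IsMaxOn.localize <| isMaxOn_iff.2 fun h (hh : 0 ≤ h) => ?_
      rcases hh.eq_or_lt with rfl | hh
      · exact le_rfl
      · simpa using hsub p hp h hh
    linarith [hmax.hasDerivAt_nonpos_of_Ici (hline p)]
  obtain ⟨q, hq, hqopt⟩ := hopt
  have heq : D (q, 1) = L q := by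
    have hmax : IsLocalMax (fun h => V (x + h * q) (t + h) - h * L q) 0 :=
      Eventually.of_forall fun h => by simpa using hqopt h
    linarith [hmax.hasDerivAt_eq_zero (hline q)]
  have hgreatest : IsGreatest ((fun p => D (1, 0) * p - L p) '' Icc a b) (-D (0, 1)) := by
    refine ⟨⟨q, hq, by linarith [hDp q]⟩, ?_⟩
    rintro _ ⟨p, hp, rfl⟩
    linarith [hDp p, hle p hp]
  rw [hgreatest.csSup_eq, add_neg_cancel]

/-- The Hopf–Lax formula parametrised by the velocity `q = (x - y) / t` instead of the foot `y`. -/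
noncomputable def hopfLax (L g : ℝ → ℝ) (a b x t : ℝ) : ℝ :=
  sInf ((fun q => t * L q + g (x - t * q)) '' Icc a b)

section HopfLax

variable {a b : ℝ} {L g : ℝ → ℝ}

theorem sInf_image_Icc_eq_hopfLax {x t : ℝ} (ht : 0 < t) :
    sInf ((fun y => t * L ((x - y) / t) + g y) '' Icc (x - b * t) (x - a * t)) =
      hopfLax L g a b x t := by
  have hfoot : (fun q => x - t * q) '' Icc a b = Icc (x - b * t) (x - a * t) := by
    rw [← image_image (fun y => x - y) (t * ·), image_mul_left_Icc' ht, image_const_sub_Icc,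
      mul_comm t, mul_comm t]
  rw [hopfLax, ← hfoot, image_image]
  congr 1
  refine image_congr fun q _ => ?_
  rw [sub_sub_cancel, mul_div_cancel_left₀ q ht.ne']

theorem isLeast_hopfLax (hab : a ≤ b) (hL : ContinuousOn L (Icc a b)) (hg : Continuous g)
    (x t : ℝ) :
    IsLeast ((fun q => t * L q + g (x - t * q)) '' Icc a b) (hopfLax L g a b x t) := by
  have hcont : ContinuousOn (fun q => t * L q + g (x - t * q)) (Icc a b) :=
    (continuousOn_const.mul hL).add (hg.comp_continuousOn (by fun_prop))
  obtain ⟨m, hm⟩ := (isCompact_Icc.image_of_continuousOn hcont).exists_isLeast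
    ((nonempty_Icc.2 hab).image _)
  rwa [hopfLax, hm.csInf_eq]

theorem hopfLax_le (hab : a ≤ b) (hL : ContinuousOn L (Icc a b)) (hg : Continuous g)
    {q : ℝ} (hq : q ∈ Icc a b) (x t : ℝ) :
    hopfLax L g a b x t ≤ t * L q + g (x - t * q) :=
  (isLeast_hopfLax hab hL hg x t).2 (mem_image_of_mem _ hq)

theorem exists_hopfLax_eq (hab : a ≤ b) (hL : ContinuousOn L (Icc a b)) (hg : Continuous g)
    (x t : ℝ) : ∃ q ∈ Icc a b, hopfLax L g a b x t = t * L q + g (x - t * q) := by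
  obtain ⟨q, hq, hEq⟩ := (isLeast_hopfLax hab hL hg x t).1
  exact ⟨q, hq, hEq.symm⟩

theorem hopfLax_zero (hab : a ≤ b) (x : ℝ) : hopfLax L g a b x 0 = g x := by
  simp [hopfLax, (nonempty_Icc.2 hab).image_const]

theorem hopfLax_add_le_of_eq (hab : a ≤ b) (hL : ContinuousOn L (Icc a b)) (hg : Continuous g)
    {x t q : ℝ} (hq : q ∈ Icc a b) (hopt : hopfLax L g a b x t = t * L q + g (x - t * q))
    (h : ℝ) : hopfLax L g a b (x + h * q) (t + h) ≤ hopfLax L g a b x t + h * L q := by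
  have := hopfLax_le hab hL hg hq (x + h * q) (t + h)
  rw [show x + h * q - (t + h) * q = x - t * q by ring] at this
  linarith

/-- Dynamic programming: convexity of `L` lets a path with velocity `p` on `[t, t + h]` be merged
with an optimal path on `[0, t]` into a single straight competitor. -/
theorem hopfLax_add_le (hab : a ≤ b) (hLconv : ConvexOn ℝ (Icc a b) L)
    (hL : ContinuousOn L (Icc a b)) (hg : Continuous g) {x t h p : ℝ} (ht : 0 ≤ t) (hh : 0 < h)
    (hp : p ∈ Icc a b) :
    hopfLax L g a b (x + h * p) (t + h) ≤ hopfLax L g a b x t + h * L p := by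
  obtain ⟨q, hq, hopt⟩ := exists_hopfLax_eq hab hL hg x t
  have hth : 0 < t + h := by linarith
  set r := (h / (t + h)) • p + (t / (t + h)) • q
  have hw₁ : 0 ≤ h / (t + h) := by positivity
  have hw₂ : 0 ≤ t / (t + h) := by positivity
  have hw : h / (t + h) + t / (t + h) = 1 := by rw [← add_div, add_comm, div_self hth.ne']
  have hr : r ∈ Icc a b := convex_Icc a b hp hq hw₁ hw₂ hw
  have hLr : (t + h) * L r ≤ h * L p + t * L q := calc
    (t + h) * L r ≤ (t + h) * ((h / (t + h)) • L p + (t / (t + h)) • L q) :=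
      mul_le_mul_of_nonneg_left (hLconv.2 hp hq hw₁ hw₂ hw) hth.le
    _ = h * L p + t * L q := by simp only [smul_eq_mul]; field_simp
  have hfoot : x + h * p - (t + h) * r = x - t * q := by
    simp only [r, smul_eq_mul]
    field_simp
    ring
  have := hopfLax_le hab hL hg hr (x + h * p) (t + h)
  rw [hfoot] at this
  linarith

theorem lipschitzWith_hopfLax_space (hab : a ≤ b) (hL : ContinuousOn L (Icc a b)) {K : ℝ≥0}
    (hg : LipschitzWith K g) (t : ℝ) : LipschitzWith K fun x => hopfLax L g a b x t := by
  refine LipschitzWith.of_le_add_mul K fun x x' => ?_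
  obtain ⟨q, hq, hopt⟩ := exists_hopfLax_eq hab hL hg.continuous x' t
  have hgq := hg.le_add_mul (x - t * q) (x' - t * q)
  rw [dist_sub_right] at hgq
  linarith [hopfLax_le hab hL hg.continuous hq x t]

theorem lipschitzOnWith_hopfLax_time (hab : a ≤ b) (hLconv : ConvexOn ℝ (Icc a b) L)
    (hL : ContinuousOn L (Icc a b)) {K C : ℝ≥0} (hg : LipschitzWith K g)
    (hC : ∀ q ∈ Icc a b, |L q| + K * |q| ≤ C) (x : ℝ) :
    LipschitzOnWith C (hopfLax L g a b x) (Ici 0) := by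
  refine LipschitzOnWith.of_le_add_mul C fun t (ht : 0 ≤ t) s (hs : 0 ≤ s) => ?_
  rw [Real.dist_eq]
  rcases lt_or_ge s t with hst | hts
  · -- follow velocity `a` for time `t - s`, then compare starting points in space
    have ha : a ∈ Icc a b := left_mem_Icc.2 hab
    have hstep := hopfLax_add_le hab hLconv hL hg.continuous (x := x - (t - s) * a) hs
      (sub_pos.2 hst) ha
    rw [sub_add_cancel, add_sub_cancel] at hstep
    have hshift := (lipschitzWith_hopfLax_space hab hL hg s).le_add_mul (x - (t - s) * a) x
    rw [Real.dist_eq, show x - (t - s) * a - x = -((t - s) * a) by ring, abs_neg, abs_mul,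
      abs_of_pos (sub_pos.2 hst)] at hshift
    rw [abs_of_pos (sub_pos.2 hst)]
    nlinarith [hC a ha, abs_nonneg (L a), le_abs_self (L a)]
  · obtain ⟨q, hq, hopt⟩ := exists_hopfLax_eq hab hL hg.continuous x s
    have hgq := hg.le_add_mul (x - t * q) (x - s * q)
    rw [Real.dist_eq, show x - t * q - (x - s * q) = (s - t) * q by ring, abs_mul] at hgq
    rw [abs_of_nonneg (sub_nonneg.2 hts)] at hgq
    rw [abs_of_nonpos (sub_nonpos.2 hts)]
    have := hopfLax_le hab hL hg.continuous hq x t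
    nlinarith [hC q hq, neg_abs_le (L q)]

theorem lipschitzOnWith_hopfLax (hab : a ≤ b) (hLconv : ConvexOn ℝ (Icc a b) L)
    (hL : ContinuousOn L (Icc a b)) {K C : ℝ≥0} (hg : LipschitzWith K g)
    (hC : ∀ q ∈ Icc a b, |L q| + K * |q| ≤ C) :
    LipschitzOnWith (K + C) (uncurry (hopfLax L g a b)) (univ ×ˢ Ici 0) :=
  LipschitzOnWith.uncurry_univ_prod (fun t _ => lipschitzWith_hopfLax_space hab hL hg t)
    (lipschitzOnWith_hopfLax_time hab hLconv hL hg hC)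

theorem hopfLax_hamiltonJacobi (hab : a ≤ b) (hLconv : ConvexOn ℝ (Icc a b) L)
    (hL : ContinuousOn L (Icc a b)) (hg : Continuous g) {x t : ℝ} (ht : 0 ≤ t)
    {D : ℝ × ℝ →L[ℝ] ℝ} (hD : HasFDerivAt (uncurry (hopfLax L g a b)) D (x, t)) :
    D (0, 1) + sSup ((fun p => D (1, 0) * p - L p) '' Icc a b) = 0 := by
  obtain ⟨q, hq, hopt⟩ := exists_hopfLax_eq hab hL hg x t
  exact hamiltonian_eq_of_hasFDerivAt hD
    (fun p hp h hh => hopfLax_add_le hab hLconv hL hg ht hh hp)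
    ⟨q, hq, hopfLax_add_le_of_eq hab hL hg hq hopt⟩

theorem tendsto_hopfLax_nhdsGT_zero (hab : a ≤ b) (hLconv : ConvexOn ℝ (Icc a b) L)
    (hL : ContinuousOn L (Icc a b)) {K C : ℝ≥0} (hg : LipschitzWith K g)
    (hC : ∀ q ∈ Icc a b, |L q| + K * |q| ≤ C) (x : ℝ) :
    Tendsto (hopfLax L g a b x) (𝓝[>] 0) (𝓝 (g x)) := by
  have hcont : ContinuousWithinAt (hopfLax L g a b x) (Ici 0) 0 :=
    (lipschitzOnWith_hopfLax_time hab hLconv hL hg hC x).continuousOn _ self_mem_Ici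
  rw [ContinuousWithinAt, hopfLax_zero hab] at hcont
  exact hcont.mono_left (nhdsWithin_mono _ Ioi_subset_Ici_self)

end HopfLax

/-- Theorem 3.7 (Theorem 6): the Hopf–Lax function is an almost-everywhere
solution of `u_t + H(u_x) = 0` on `ℝ × (0,∞)` and attains the initial
condition `g` as `t → 0⁺`. -/
theorem stmt9 (a b : ℝ) (ha : a < 0) (hb : 0 < b) (L : ℝ → ℝ)
    (hLconv : ConvexOn ℝ (Set.Icc a b) L) (hLcont : ContinuousOn L (Set.Icc a b))
    (g : ℝ → ℝ) (hg : ∃ K : NNReal, LipschitzWith K g) :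
    let u : ℝ → ℝ → ℝ := fun x t =>
      sInf ((fun y => t * L ((x - y) / t) + g y) '' Set.Icc (x - b * t) (x - a * t))
    let H : ℝ → ℝ := fun v => sSup ((fun p => v * p - L p) '' Set.Icc a b)
    let U : ℝ × ℝ → ℝ := fun q => u q.1 q.2
    (∀ᵐ p : ℝ × ℝ ∂volume, 0 < p.2 →
      DifferentiableAt ℝ U p ∧
      fderiv ℝ U p (0, 1) + H (fderiv ℝ U p (1, 0)) = 0) ∧
    (∀ x : ℝ, Filter.Tendsto (fun t => u x t) (nhdsWithin 0 (Set.Ioi 0)) (nhds (g x))) := by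
  obtain ⟨K, hgK⟩ := hg
  intro u H U
  have hab : a ≤ b := (ha.trans hb).le
  have hUeq : EqOn U (uncurry (hopfLax L g a b)) {z | 0 < z.2} :=
    fun z hz => sInf_image_Icc_eq_hopfLax hz
  obtain ⟨C, hC⟩ := isCompact_Icc.exists_bound_of_continuousOn
    (f := fun q => |L q| + K * |q|) (by fun_prop)
  have hC' : ∀ q ∈ Icc a b, |L q| + K * |q| ≤ C.toNNReal :=
    fun q hq => (Real.le_norm_self _).trans ((hC q hq).trans (Real.le_coe_toNNReal C))
  obtain ⟨E, hE, hEq⟩ := (lipschitzOnWith_hopfLax hab hLconv hLcont hgK hC').extend_real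
  refine ⟨?_, fun x => ?_⟩
  · filter_upwards [hE.ae_differentiableAt] with z hzE hz
    have hnhds : {w : ℝ × ℝ | 0 < w.2} ∈ 𝓝 z :=
      (isOpen_lt continuous_const continuous_snd).mem_nhds hz
    have hUV : U =ᶠ[𝓝 z] uncurry (hopfLax L g a b) := hUeq.eventuallyEq_of_mem hnhds
    have hVE : uncurry (hopfLax L g a b) =ᶠ[𝓝 z] E :=
      eventually_of_mem hnhds fun w (hw : 0 < w.2) => hEq ⟨trivial, mem_Ici.2 hw.le⟩
    have hdiff := (hUV.trans hVE).differentiableAt_iff.2 hzE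
    exact ⟨hdiff, hopfLax_hamiltonJacobi hab hLconv hLcont hgK.continuous hz.le
      (hdiff.hasFDerivAt.congr_of_eventuallyEq hUV.symm)⟩
  · refine (tendsto_hopfLax_nhdsGT_zero hab hLconv hLcont hgK hC' x).congr' ?_
    filter_upwards [self_mem_nhdsWithin] with t ht
    exact (sInf_image_Icc_eq_hopfLax ht).symm
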